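/- Let T be a norm on ℝ³ that is differentiable away from 0 and whose unit ball {T ≤ 1} is strictly convex, and let P ⊂ ℝ³ be a 2-dimensional linear subspace. Then there exists ξ₀ ∈ ℝ³ with T(ξ₀) = 1 such that fderiv T ξ₀ vanishes on P, and the set of all ξ with T(ξ) = 1 and fderiv T ξ vanishing on P is exactly {ξ₀, −ξ₀}. -/

import Mathlib

/-!
Let `φ` be a nonzero linear functional vanishing on `P`. A maximiser `ξ₀` of `φ` on the unit
ball `{T ≤ 1}` (compact, since `T` is a norm on a finite-dimensional space) satisfies
`φ ≤ φ ξ₀ • T`; hence `T ξ₀ = 1` and `ξ₀` minimises `T` on the plane `ξ₀ + ker φ`, so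
`dT(ξ₀)` kills `P`, and so does `dT(-ξ₀) = -dT(ξ₀)`.

Conversely, let `dT(ξ)` kill `P` with `T ξ = 1`. Euler's identity `dT(ξ) ξ = T ξ` shows that
both tangent functionals are nonzero, so both have kernel `P`, which gives
`dT(ξ₀) ξ * dT(ξ) ξ₀ = 1`. Since `|dT(ξ) y| ≤ T y`, both factors are `±1`, and then
`dT(ξ₀) (±ξ) = 1`: by strict convexity `±ξ = ξ₀`, for otherwise `dT(ξ₀)` would take the
value `1` at the midpoint of `ξ₀` and `±ξ`, where `T < 1`.
-/

namespace Seminorm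

variable {E : Type*} [NormedAddCommGroup E] [NormedSpace ℝ E] (p : Seminorm ℝ E) {x y : E}

theorem fderiv_apply_self (hx : DifferentiableAt ℝ p x) : fderiv ℝ p x x = p x := by
  refine tendsto_nhds_unique (hx.hasFDerivAt.hasLineDerivAt x).tendsto_slope_zero_right
    (tendsto_const_nhds.congr' ?_)
  filter_upwards [self_mem_nhdsWithin] with t (ht : 0 < t)
  rw [show x + t • x = (1 + t) • x by module, map_smul_eq_mul, Real.norm_of_nonneg (by linarith),
    smul_eq_mul]
  field_simp
  ring

theorem fderiv_apply_le (hx : DifferentiableAt ℝ p x) (y : E) : fderiv ℝ p x y ≤ p y := by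
  refine le_of_tendsto (hx.hasFDerivAt.hasLineDerivAt y).tendsto_slope_zero_right ?_
  filter_upwards [self_mem_nhdsWithin] with t (ht : 0 < t)
  calc t⁻¹ • (p (x + t • y) - p x) ≤ t⁻¹ • (p x + t * p y - p x) := by
        gcongr
        calc p (x + t • y) ≤ p x + p (t • y) := map_add_le_add p _ _
          _ = p x + t * p y := by rw [map_smul_eq_mul, Real.norm_of_nonneg ht.le]
    _ = p y := by rw [add_sub_cancel_left, smul_eq_mul, inv_mul_cancel_left₀ ht.ne']

theorem abs_fderiv_apply_le (hx : DifferentiableAt ℝ p x) (y : E) : |fderiv ℝ p x y| ≤ p y :=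
  abs_le.2 ⟨by linarith [map_neg_eq_map p y, map_neg (fderiv ℝ p x) y, p.fderiv_apply_le hx (-y)],
    p.fderiv_apply_le hx y⟩

theorem fderiv_neg (x : E) : fderiv ℝ p (-x) = -fderiv ℝ p x := by
  have h := (ContinuousLinearEquiv.neg ℝ (M := E)).comp_right_fderiv (f := p) (x := -x)
  have hp : ⇑p ∘ ⇑(ContinuousLinearEquiv.neg ℝ (M := E)) = p := funext (map_neg_eq_map p)
  rw [hp] at h
  ext v
  simp [h]

theorem eq_of_fderiv_apply_eq_one
    (hstrict : ∀ x y : E, p x = 1 → p y = 1 → x ≠ y →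
      ∀ t : ℝ, 0 < t → t < 1 → p (t • x + (1 - t) • y) < 1)
    (hx : p x = 1) (hy : p y = 1) (hdx : DifferentiableAt ℝ p x)
    (h : fderiv ℝ p x y = 1) : y = x := by
  by_contra hne
  have hmid := hstrict x y hx hy (Ne.symm hne) (1 / 2) (by norm_num) (by norm_num)
  have hsupp := p.fderiv_apply_le hdx ((1 / 2 : ℝ) • x + (1 - 1 / 2 : ℝ) • y)
  rw [map_add, map_smul, map_smul, p.fderiv_apply_self hdx, hx, h] at hsupp
  norm_num at hsupp
  linarith

theorem eq_or_eq_neg_of_fderiv_apply_mul_eq_one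
    (hstrict : ∀ x y : E, p x = 1 → p y = 1 → x ≠ y →
      ∀ t : ℝ, 0 < t → t < 1 → p (t • x + (1 - t) • y) < 1)
    (hx : p x = 1) (hy : p y = 1)
    (hdx : DifferentiableAt ℝ p x) (hdy : DifferentiableAt ℝ p y)
    (h : fderiv ℝ p x y * fderiv ℝ p y x = 1) : y = x ∨ y = -x := by
  have ha := p.abs_fderiv_apply_le hdx y
  have hb := p.abs_fderiv_apply_le hdy x
  rw [hy] at ha
  rw [hx] at hb
  have hunit : |fderiv ℝ p x y| = 1 := by
    refine le_antisymm ha ?_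
    calc 1 = |fderiv ℝ p x y| * |fderiv ℝ p y x| := by rw [← abs_mul, h, abs_one]
      _ ≤ |fderiv ℝ p x y| := mul_le_of_le_one_right (abs_nonneg _) hb
  rcases abs_eq (zero_le_one' ℝ) |>.1 hunit with h1 | h1
  · exact Or.inl (p.eq_of_fderiv_apply_eq_one hstrict hx hy hdx h1)
  · refine Or.inr (neg_eq_iff_eq_neg.1 (p.eq_of_fderiv_apply_eq_one hstrict hx ?_ hdx ?_))
    · rwa [map_neg_eq_map]
    · rw [map_neg, h1, neg_neg]

theorem one_le_of_isMaxOn_closedBall (hp : ∀ x, p x = 0 → x = 0) {φ : E →ₗ[ℝ] ℝ} (hφ : φ ≠ 0)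
    {ξ : E} (hξ : IsMaxOn φ (p.closedBall 0 1) ξ) {z : E} (hz : φ z = φ ξ) : 1 ≤ p z := by
  have hle : ∀ y, φ y ≤ φ ξ * p y := by
    intro y
    rcases (apply_nonneg p y).eq_or_lt with h0 | hpos
    · simp [hp y h0.symm]
    · have hmem : (p y)⁻¹ • y ∈ p.closedBall 0 1 := by
        rw [mem_closedBall_zero, map_smul_eq_mul, norm_inv, Real.norm_of_nonneg hpos.le,
          inv_mul_cancel₀ hpos.ne']
      have : φ ((p y)⁻¹ • y) ≤ φ ξ := hξ hmem
      rw [map_smul, smul_eq_mul, inv_mul_le_iff₀ hpos] at this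
      linarith
  have hpos : 0 < φ ξ := by
    by_contra! hnonpos
    refine hφ (LinearMap.ext fun y => le_antisymm ?_ ?_) <;> rw [LinearMap.zero_apply]
    · nlinarith [hle y, apply_nonneg p y]
    · nlinarith [hle (-y), apply_nonneg p (-y), map_neg φ y]
  have := hle z
  rw [hz] at this
  nlinarith

variable [FiniteDimensional ℝ E]

theorem continuous_of_finiteDimensional : Continuous p :=
  p.convexOn.locallyLipschitz.continuous

theorem exists_pos_mul_norm_le (hp : ∀ x, p x = 0 → x = 0) : ∃ m > 0, ∀ x, m * ‖x‖ ≤ p x := by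
  obtain ⟨m, hm, hmS⟩ := (isCompact_sphere (0 : E) 1).exists_forall_le'
    p.continuous_of_finiteDimensional.continuousOn (a := 0) fun y hy =>
      (apply_nonneg p y).lt_of_ne' fun h => by simp [hp y h] at hy
  refine ⟨m, hm, fun x => ?_⟩
  rcases eq_or_ne x 0 with rfl | hx
  · simp
  have hx' : 0 < ‖x‖ := norm_pos_iff.2 hx
  have := hmS (‖x‖⁻¹ • x) (by simp [norm_smul, hx'.ne'])
  rwa [map_smul_eq_mul, norm_inv, norm_norm, le_inv_mul_iff₀ hx', mul_comm] at this

theorem isCompact_closedBall_zero (hp : ∀ x, p x = 0 → x = 0) (r : ℝ) :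
    IsCompact (p.closedBall 0 r) := by
  obtain ⟨m, hm, hmp⟩ := p.exists_pos_mul_norm_le hp
  refine Metric.isCompact_of_isClosed_isBounded ?_ ?_
  · rw [closedBall_zero_eq]
    exact isClosed_le p.continuous_of_finiteDimensional continuous_const
  · refine isBounded_iff_forall_norm_le.2 ⟨r / m, fun y hy => ?_⟩
    rw [le_div_iff₀' hm]
    exact (hmp y).trans ((mem_closedBall_zero p).1 hy)

theorem exists_apply_eq_one_forall_fderiv_eq_zero (hp : ∀ x, p x = 0 → x = 0)
    (hdiff : ∀ x, x ≠ 0 → DifferentiableAt ℝ p x) {φ : E →ₗ[ℝ] ℝ} (hφ : φ ≠ 0) :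
    ∃ ξ, p ξ = 1 ∧ ∀ v ∈ LinearMap.ker φ, fderiv ℝ p ξ v = 0 := by
  obtain ⟨ξ, hξB, hξ⟩ := (p.isCompact_closedBall_zero hp 1).exists_isMaxOn
    ⟨0, mem_closedBall_self p zero_le_one⟩ φ.continuous_of_finiteDimensional.continuousOn
  have hξ1 : p ξ = 1 := le_antisymm ((mem_closedBall_zero p).1 hξB)
    (p.one_le_of_isMaxOn_closedBall hp hφ hξ rfl)
  have hξ0 : ξ ≠ 0 := fun h => by simp [h] at hξ1
  refine ⟨ξ, hξ1, fun v hv => ?_⟩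
  have hmin : IsLocalMin (fun t : ℝ => p (ξ + t • v)) 0 :=
    Filter.Eventually.of_forall fun t => by
      simpa [hξ1] using p.one_le_of_isMaxOn_closedBall hp hφ hξ (z := ξ + t • v)
        (by simp [LinearMap.mem_ker.1 hv])
  exact hmin.hasDerivAt_eq_zero ((hdiff ξ hξ0).hasFDerivAt.hasLineDerivAt v)

end Seminorm

namespace LinearMap

variable {K V : Type*} [Field K] [AddCommGroup V] [Module K V] {f : V →ₗ[K] K} {x₀ : V}

theorem apply_eq_mul_of_ker_le (hx₀ : f x₀ = 1) {g : V →ₗ[K] K} (hker : ker f ≤ ker g) (x : V) :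
    g x = f x * g x₀ := by
  have : x - f x • x₀ ∈ ker f := by simp [hx₀]
  simpa [sub_eq_zero] using hker this

theorem ker_eq_of_le_ker [FiniteDimensional K V] (hx₀ : f x₀ = 1) {P : Submodule K V}
    (hP : Module.finrank K P + 1 = Module.finrank K V) (hPf : P ≤ ker f) : ker f = P := by
  have hf : f ≠ 0 := fun h => by simp [h] at hx₀
  refine (Submodule.eq_of_le_of_finrank_eq hPf ?_).symm
  have := Module.Dual.finrank_ker_add_one_of_ne_zero hf
  omega

end LinearMap

theorem two_antipodal_tangency_points_general
    (T : EuclideanSpace ℝ (Fin 3) → ℝ)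
    (hT1 : ∀ x, T x = 0 ↔ x = 0)
    (hT2 : ∀ (c : ℝ) (x : EuclideanSpace ℝ (Fin 3)), T (c • x) = |c| * T x)
    (hT3 : ∀ x y, T (x + y) ≤ T x + T y)
    (hTdiff : ∀ x : EuclideanSpace ℝ (Fin 3), x ≠ 0 → DifferentiableAt ℝ T x)
    (hstrict : ∀ x y : EuclideanSpace ℝ (Fin 3), T x = 1 → T y = 1 → x ≠ y →
      ∀ t : ℝ, 0 < t → t < 1 → T (t • x + (1 - t) • y) < 1)
    (P : Submodule ℝ (EuclideanSpace ℝ (Fin 3)))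
    (hP : Module.finrank ℝ P = 2) :
    ∃ ξ₀ : EuclideanSpace ℝ (Fin 3), T ξ₀ = 1 ∧
      (∀ v ∈ P, fderiv ℝ T ξ₀ v = 0) ∧
      {ξ : EuclideanSpace ℝ (Fin 3) | T ξ = 1 ∧ ∀ v ∈ P, fderiv ℝ T ξ v = 0} =
        {ξ₀, -ξ₀} := by
  obtain ⟨p, rfl⟩ : ∃ p : Seminorm ℝ (EuclideanSpace ℝ (Fin 3)), ⇑p = T :=
    ⟨.of T hT3 hT2, rfl⟩
  have hp x : p x = 0 → x = 0 := (hT1 x).1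
  have hdiff {ξ} (hξ : p ξ = 1) : DifferentiableAt ℝ p ξ := hTdiff ξ fun h => by simp [h] at hξ
  have hPcodim : Module.finrank ℝ P + 1 = Module.finrank ℝ (EuclideanSpace ℝ (Fin 3)) := by
    simp [hP]
  obtain ⟨φ, hφ, hPφ⟩ := P.exists_le_ker_of_lt_top
    (Submodule.lt_top_of_finrank_lt_finrank (by omega))
  obtain ⟨ξ₀, hξ₀, hker₀⟩ := p.exists_apply_eq_one_forall_fderiv_eq_zero hp hTdiff hφ
  have hann₀ : ∀ v ∈ P, fderiv ℝ p ξ₀ v = 0 := fun v hv => hker₀ v (hPφ hv)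
  have hself₀ : fderiv ℝ p ξ₀ ξ₀ = 1 := (p.fderiv_apply_self (hdiff hξ₀)).trans hξ₀
  have hkerP : LinearMap.ker (fderiv ℝ p ξ₀ : _ →ₗ[ℝ] ℝ) = P :=
    LinearMap.ker_eq_of_le_ker hself₀ hPcodim hann₀
  refine ⟨ξ₀, hξ₀, hann₀, Set.Subset.antisymm ?_ ?_⟩
  · rintro ξ ⟨hξ, hann⟩
    have hmul := LinearMap.apply_eq_mul_of_ker_le hself₀ (hkerP.trans_le fun v hv => hann v hv) ξ
    simp only [ContinuousLinearMap.coe_coe, p.fderiv_apply_self (hdiff hξ), hξ] at hmul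
    exact p.eq_or_eq_neg_of_fderiv_apply_mul_eq_one hstrict hξ₀ hξ (hdiff hξ₀) (hdiff hξ) hmul.symm
  · rintro ξ (rfl | rfl)
    · exact ⟨hξ₀, hann₀⟩
    · exact ⟨by rwa [map_neg_eq_map], fun v hv => by simp [p.fderiv_neg, hann₀ v hv]⟩

/-- For a norm `T` on ℝ³, differentiable away from `0` and with
strictly convex unit ball, and a 2-dimensional subspace `P`, there are exactly
two (antipodal) points of the Wulff shape `{T = 1}` where the derivative of `T`
annihilates `P`. -/
theorem two_antipodal_tangency_points
    (T : EuclideanSpace ℝ (Fin 3) → ℝ)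
    (hT0 : ∀ x, 0 ≤ T x)
    (hT1 : ∀ x, T x = 0 ↔ x = 0)
    (hT2 : ∀ (c : ℝ) (x : EuclideanSpace ℝ (Fin 3)), T (c • x) = |c| * T x)
    (hT3 : ∀ x y, T (x + y) ≤ T x + T y)
    (hTdiff : ∀ x : EuclideanSpace ℝ (Fin 3), x ≠ 0 → DifferentiableAt ℝ T x)
    (hstrict : ∀ x y : EuclideanSpace ℝ (Fin 3), T x = 1 → T y = 1 → x ≠ y →
      ∀ t : ℝ, 0 < t → t < 1 → T (t • x + (1 - t) • y) < 1)
    (P : Submodule ℝ (EuclideanSpace ℝ (Fin 3)))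
    (hP : Module.finrank ℝ P = 2) :
    ∃ ξ₀ : EuclideanSpace ℝ (Fin 3), T ξ₀ = 1 ∧
      (∀ v ∈ P, fderiv ℝ T ξ₀ v = 0) ∧
      {ξ : EuclideanSpace ℝ (Fin 3) | T ξ = 1 ∧ ∀ v ∈ P, fderiv ℝ T ξ v = 0} =
        {ξ₀, -ξ₀} :=
  two_antipodal_tangency_points_general T hT1 hT2 hT3 hTdiff hstrict P hP
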